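/- Let τ ∈ ℂ with Im τ > 0, and let γ = (a b; c d) ∈ SL(2,ℤ) be an element of the principal congruence subgroup Γ(2), i.e. a ≡ d ≡ 1 (mod 2) and b ≡ c ≡ 0 (mod 2). Then the modular lambda function λ(τ) = θ₂(τ)⁴/θ₃(τ)⁴ satisfies λ((aτ+b)/(cτ+d)) = λ(τ). That is, λ is a modular function (Hauptmodul) for Γ(2). -/

import Mathlib

open Complex

/-- The Jacobi theta constant `θ₂(τ) = ∑_{n∈ℤ} exp(iπτ(n+1/2)²)`. -/
noncomputable def theta2 (τ : ℂ) : ℂ :=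
  ∑' n : ℤ, Complex.exp (Real.pi * Complex.I * τ * ((n : ℂ) + 1 / 2) ^ 2)

/-- The Jacobi theta constant `θ₃(τ) = ∑_{n∈ℤ} exp(iπτ n²)`. -/
noncomputable def theta3 (τ : ℂ) : ℂ :=
  ∑' n : ℤ, Complex.exp (Real.pi * Complex.I * τ * (n : ℂ) ^ 2)

/-- The modular lambda function `λ(τ) = θ₂(τ)⁴/θ₃(τ)⁴`. -/
noncomputable def modularLambda (τ : ℂ) : ℂ := theta2 τ ^ 4 / theta3 τ ^ 4

noncomputable def theta4 (τ : ℂ) : ℂ := jacobiTheta₂ (1/2) τ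
noncomputable def modularMu (τ : ℂ) : ℂ := theta4 τ ^ 4 / theta3 τ ^ 4

lemma theta2_eq (τ : ℂ) : theta2 τ = Complex.exp (Real.pi * I * τ / 4) * jacobiTheta₂ (τ/2) τ := by
  rw [jacobiTheta₂, ← tsum_mul_left]
  refine tsum_congr fun n => ?_
  rw [jacobiTheta₂_term, ← Complex.exp_add]; congr 1; ring

lemma theta3_eq (τ : ℂ) : theta3 τ = jacobiTheta₂ 0 τ := by
  refine tsum_congr fun n => ?_
  rw [jacobiTheta₂_term]; congr 1; ring

lemma cpow_half_ne_zero {τ : ℂ} (hτ : τ ≠ 0) : (-I * τ) ^ (1/2 : ℂ) ≠ 0 := by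
  rw [Ne, Complex.cpow_eq_zero_iff]
  simp [hτ, Complex.I_ne_zero]

lemma theta3_S (τ : ℂ) : theta3 τ = (1 / (-I * τ) ^ (1/2 : ℂ)) * theta3 (-1/τ) := by
  rw [theta3_eq, theta3_eq, jacobiTheta₂_functional_equation 0 τ]
  norm_num

lemma theta4_S (τ : ℂ) : theta4 τ = (1 / (-I * τ) ^ (1/2 : ℂ)) * theta2 (-1/τ) := by
  rw [theta4, theta2_eq, jacobiTheta₂_functional_equation (1/2) τ,
    show ((-1/τ)/2 : ℂ) = -((1/2)/τ) by ring, jacobiTheta₂_neg_left]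
  rw [mul_assoc, mul_assoc]
  congr 2
  congr 1
  ring

lemma theta2_Sinv (τ : ℂ) (hτ : τ ≠ 0) : theta2 (-1/τ) = (-I * τ) ^ (1/2 : ℂ) * theta4 τ := by
  rw [theta4_S τ, ← mul_assoc, mul_one_div, div_self (cpow_half_ne_zero hτ), one_mul]

lemma theta3_Sinv (τ : ℂ) (hτ : τ ≠ 0) : theta3 (-1/τ) = (-I * τ) ^ (1/2 : ℂ) * theta3 τ := by
  conv_rhs => rw [theta3_S τ]
  rw [← mul_assoc, mul_one_div, div_self (cpow_half_ne_zero hτ), one_mul]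

lemma theta4_Sinv (τ : ℂ) (hτ : 0 < τ.im) : theta4 (-1/τ) = (1 / (-I * (-1/τ)) ^ (1/2 : ℂ)) * theta2 τ := by
  have h1 : (-1/τ : ℂ) ≠ 0 := by
    intro h
    rw [div_eq_zero_iff] at h
    rcases h with h | h
    · exact (by norm_num : (-1:ℂ) ≠ 0) h
    · simp [h] at hτ
  have h2 : (-1/(-1/τ) : ℂ) = τ := by
    field_simp
  have := theta4_S (-1/τ)
  rwa [h2] at this

lemma sq_cpow_half {x : ℂ} (hx : x ≠ 0) : (x ^ (1/2 : ℂ)) ^ 2 = x := by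
  rw [sq, ← Complex.cpow_add _ _ hx]
  norm_num

lemma pow4_cpow_half {x : ℂ} (hx : x ≠ 0) : (x ^ (1/2 : ℂ)) ^ 4 = x ^ 2 := by
  have : (x ^ (1/2:ℂ)) ^ 4 = ((x ^ (1/2:ℂ)) ^ 2) ^ 2 := by ring
  rw [this, sq_cpow_half hx]

lemma theta2_period (τ : ℂ) : theta2 (τ + 2) = I * theta2 τ := by
  rw [theta2_eq, theta2_eq, jacobiTheta₂_add_right,
    show ((τ+2)/2 : ℂ) = τ/2 + 1 by ring, jacobiTheta₂_add_left, ← mul_assoc]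
  congr 1
  rw [show (↑Real.pi * I * (τ + 2) / 4 : ℂ) = ↑Real.pi * I / 2 + ↑Real.pi * I * τ / 4 by ring,
    Complex.exp_add]
  congr 1
  rw [show (↑Real.pi * I / 2 : ℂ) = (↑(Real.pi / 2)) * I by push_cast; ring, Complex.exp_mul_I]
  simp

lemma theta3_period (τ : ℂ) : theta3 (τ + 2) = theta3 τ := by
  rw [theta3_eq, theta3_eq, jacobiTheta₂_add_right]

lemma theta4_period (τ : ℂ) : theta4 (τ + 2) = theta4 τ :=
  jacobiTheta₂_add_right _ _

lemma lambda_period (τ : ℂ) : modularLambda (τ + 2) = modularLambda τ := by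
  rw [modularLambda, modularLambda, theta2_period, theta3_period, mul_pow, Complex.I_pow_four, one_mul]

lemma mu_period (τ : ℂ) : modularMu (τ + 2) = modularMu τ := by
  rw [modularMu, modularMu, theta4_period, theta3_period]

lemma lambda_vadd (m : ℤ) (τ : ℂ) : modularLambda (τ + 2*m) = modularLambda τ := by
  induction m using Int.induction_on with
  | zero => simp
  | succ k ih =>
      rw [show (τ + 2*((k:ℤ)+1:ℤ) : ℂ) = (τ + 2*(k:ℤ)) + 2 by push_cast; ring, lambda_period, ih]
  | pred k ih =>
      push_cast at ih ⊢
      have h := lambda_period (τ + 2*(-(k:ℂ)-1))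
      rw [show (τ + 2*(-(k:ℂ)-1) + 2 : ℂ) = τ + 2 * -(k:ℂ) by ring] at h
      rw [show (τ + 2*(-(k:ℂ)-1) : ℂ) = τ + 2 * (-(k:ℂ)-1) from rfl] at h
      exact h.symm.trans ih

lemma lambda_S (τ : ℂ) (hτ : 0 < τ.im) : modularLambda (-1/τ) = modularMu τ := by
  have hτ0 : τ ≠ 0 := fun h => by simp [h] at hτ
  rw [modularLambda, theta2_Sinv τ hτ0, theta3_Sinv τ hτ0, mul_pow, mul_pow,
    mul_div_mul_left _ _ (pow_ne_zero 4 (cpow_half_ne_zero hτ0))]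
  rfl

lemma mu_S (τ : ℂ) (hτ : 0 < τ.im) : modularMu (-1/τ) = modularLambda τ := by
  have hτ0 : τ ≠ 0 := fun h => by simp [h] at hτ
  have h1 : (-1/τ : ℂ) ≠ 0 := div_ne_zero (by norm_num) hτ0
  have hI : (-I * (-1/τ) : ℂ) ≠ 0 := mul_ne_zero (by simp [Complex.I_ne_zero]) h1
  have e1 : (1 / (-I * (-1/τ)) ^ ((1:ℂ)/2)) ^ 4 = -τ^2 := by
    rw [div_pow, one_pow, pow4_cpow_half hI,
      show ((-I*(-1/τ))^2 : ℂ) = I^2/τ^2 by ring, Complex.I_sq]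
    field_simp
  have e2 : ((-I*τ : ℂ) ^ ((1:ℂ)/2)) ^ 4 = -τ^2 := by
    rw [pow4_cpow_half (mul_ne_zero (by simp [Complex.I_ne_zero]) hτ0),
      show ((-I*τ)^2 : ℂ) = I^2*τ^2 by ring, Complex.I_sq]
    ring
  rw [modularMu, theta4_Sinv τ hτ, theta3_Sinv τ hτ0, mul_pow, mul_pow, e1, e2,
    mul_div_mul_left _ _ (by simpa using pow_ne_zero 2 hτ0 : (-τ^2 : ℂ) ≠ 0)]
  rfl

lemma lambda_V (τ : ℂ) (hτ : 0 < τ.im) : modularLambda (τ/(2*τ+1)) = modularLambda τ := by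
  have hτ0 : τ ≠ 0 := fun h => by simp [h] at hτ
  have hden : (2*τ+1 : ℂ) ≠ 0 := by
    intro h
    have : (2*τ+1 : ℂ).im = 0 := by rw [h]; simp
    simp [Complex.add_im, Complex.mul_im] at this
    linarith
  have him : 0 < ((-1/τ : ℂ)).im := by
    rw [neg_div, one_div, Complex.neg_im, Complex.inv_im]
    have h1 := Complex.normSq_pos.mpr hτ0
    rw [neg_div, neg_neg]
    positivity
  have him2 : 0 < ((-1/τ : ℂ) - 2).im := by
    rw [Complex.sub_im]
    simpa using him
  have key : (τ/(2*τ+1) : ℂ) = -1/((-1/τ) - 2) := by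
    rw [show ((-1/τ:ℂ) - 2) = -(2*τ+1)/τ by field_simp; ring,
      div_div_eq_mul_div, neg_one_mul, neg_div_neg_eq]
  rw [key, lambda_S _ him2]
  have h := mu_period ((-1/τ : ℂ) - 2)
  rw [show ((-1/τ : ℂ) - 2 + 2) = -1/τ by ring] at h
  rw [← h] at *
  rw [← mu_S τ hτ, h]


abbrev SL2Z := Matrix.SpecialLinearGroup (Fin 2) ℤ

lemma smul_coe (g : SL2Z) (z : UpperHalfPlane) :
    ((g • z : UpperHalfPlane) : ℂ) =
      ((g 0 0 : ℂ) * z + (g 0 1 : ℂ)) / ((g 1 0 : ℂ) * z + (g 1 1 : ℂ)) := by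
  rw [UpperHalfPlane.specialLinearGroup_apply]
  push_cast
  rfl

def lamInv : Subgroup SL2Z where
  carrier := {g | ∀ z : UpperHalfPlane, modularLambda ((g • z : UpperHalfPlane) : ℂ) = modularLambda (z : ℂ)}
  one_mem' := fun z => by rw [one_smul]
  mul_mem' := fun {a b} ha hb z => by rw [mul_smul, ha, hb]
  inv_mem' := fun {a} ha z => by
    have h := ha (a⁻¹ • z)
    rw [smul_inv_smul] at h
    exact h.symm

lemma T2_mem : ModularGroup.T ^ (2:ℤ) ∈ lamInv := by
  intro z
  rw [UpperHalfPlane.modular_T_zpow_smul z 2, UpperHalfPlane.coe_vadd]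
  push_cast
  rw [add_comm]
  exact lambda_period z

def Wmat : SL2Z := ⟨!![1,0;2,1], by simp [Matrix.det_fin_two_of]⟩

lemma W_mem : Wmat ∈ lamInv := by
  intro z
  rw [smul_coe]
  have h00 : (Wmat 0 0 : ℤ) = 1 := rfl
  have h01 : (Wmat 0 1 : ℤ) = 0 := rfl
  have h10 : (Wmat 1 0 : ℤ) = 2 := rfl
  have h11 : (Wmat 1 1 : ℤ) = 1 := rfl
  rw [h00, h01, h10, h11]
  push_cast
  rw [one_mul, add_zero]
  exact lambda_V (z : ℂ) z.2

lemma W_zpow (k : ℤ) : ((Wmat ^ k : SL2Z) : Matrix (Fin 2) (Fin 2) ℤ) = !![1,0;2*k,1] := by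
  induction k using Int.induction_on with
  | zero =>
      rw [zpow_zero, Matrix.SpecialLinearGroup.coe_one, Matrix.one_fin_two]
      norm_num
  | succ m ih =>
      rw [zpow_add_one, Matrix.SpecialLinearGroup.coe_mul, ih]
      show _ = !![(1:ℤ),0;2*((m:ℤ)+1),1]
      rw [show ((Wmat : SL2Z) : Matrix (Fin 2) (Fin 2) ℤ) = !![1,0;2,1] from rfl, Matrix.mul_fin_two]
      congr 1 <;> ring_nf
  | pred m ih =>
      rw [zpow_sub_one, Matrix.SpecialLinearGroup.coe_mul, ih]
      have hinv : ((Wmat⁻¹ : SL2Z) : Matrix (Fin 2) (Fin 2) ℤ) = !![1,0;-2,1] := by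
        rw [Matrix.SpecialLinearGroup.coe_inv,
          show ((Wmat : SL2Z) : Matrix (Fin 2) (Fin 2) ℤ) = !![1,0;2,1] from rfl,
          Matrix.adjugate_fin_two_of]
        norm_num
      rw [hinv, Matrix.mul_fin_two]
      show _ = !![(1:ℤ),0;2*(-(m:ℤ)-1),1]
      congr 1 <;> ring_nf

lemma exists_shrink (a c : ℤ) (hc : c ≠ 0) (hpar : a % 2 ≠ c % 2) :
    ∃ k : ℤ, (a + 2*k*c).natAbs < c.natAbs := by
  have habs : (c.natAbs : ℤ) % 2 = c % 2 := by omega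
  set N : ℤ := 2 * (c.natAbs : ℤ) with hN
  have hN0 : 0 < N := by
    have : c.natAbs ≠ 0 := Int.natAbs_ne_zero.mpr hc
    omega
  set q : ℤ := a / N with hq
  set r : ℤ := a % N with hrdef
  have hr0 : 0 ≤ r := Int.emod_nonneg a (by omega)
  have hr1 : r < N := Int.emod_lt_of_pos a hN0
  have hEq : N * q + r = a := Int.mul_ediv_add_emod a N
  have hrpar : r % 2 = a % 2 := Int.emod_emod_of_dvd a ⟨(c.natAbs:ℤ), hN⟩
  rcases Int.natAbs_eq c with h | h
  · have hNc : N = 2*c := by rw [hN, ← h]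
    by_cases hsmall : r < (c.natAbs : ℤ)
    · refine ⟨-q, ?_⟩
      have he : a + 2*(-q)*c = r := by
        rw [hNc] at hEq
        linear_combination -hEq
      rw [he]
      omega
    · refine ⟨-(q+1), ?_⟩
      have he : a + 2*(-(q+1))*c = r - N := by
        rw [hNc] at hEq ⊢
        linear_combination -hEq
      rw [he]
      omega
  · have hNc : N = -(2*c) := by rw [hN]; omega
    by_cases hsmall : r < (c.natAbs : ℤ)
    · refine ⟨q, ?_⟩
      have he : a + 2*q*c = r := by
        rw [hNc] at hEq
        linear_combination -hEq
      rw [he]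
      omega
    · refine ⟨q+1, ?_⟩
      have he : a + 2*(q+1)*c = r - N := by
        rw [hNc] at hEq ⊢
        linear_combination -hEq
      rw [he]
      omega

lemma det_entries (g : SL2Z) : g 0 0 * g 1 1 - g 0 1 * g 1 0 = 1 := by
  have h := g.property
  rw [Matrix.det_fin_two] at h
  exact h

lemma gamma_two_mem : ∀ n : ℕ, ∀ g : SL2Z, (g 1 0).natAbs ≤ n →
    g 0 0 % 2 = 1 → g 0 1 % 2 = 0 → g 1 0 % 2 = 0 → g ∈ lamInv := by
  intro n
  induction n using Nat.strong_induction_on with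
  | _ n IH =>
  intro g hn ha hb hc
  by_cases hc0 : g 1 0 = 0
  · have hdet := det_entries g
    rw [hc0, mul_zero, sub_zero] at hdet
    have hcases : (g 0 0 = 1 ∧ g 1 1 = 1) ∨ (g 0 0 = -1 ∧ g 1 1 = -1) := by
      rcases Int.mul_eq_one_iff_eq_one_or_neg_one.mp hdet with ⟨h1, h2⟩ | ⟨h1, h2⟩
      · exact Or.inl ⟨h1, h2⟩
      · exact Or.inr ⟨h1, h2⟩
    intro z
    rw [smul_coe, hc0]
    obtain ⟨m, hm⟩ : ∃ m, g 0 1 = 2*m := ⟨g 0 1 / 2, by omega⟩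
    rcases hcases with ⟨h1, h2⟩ | ⟨h1, h2⟩
    · rw [h1, h2, hm]
      push_cast
      rw [show ((1:ℂ)*z + 2*m)/((0:ℂ)*z+1) = (z:ℂ) + 2*(m:ℂ) by
        rw [zero_mul, zero_add, div_one, one_mul]]
      exact_mod_cast lambda_vadd m z
    · rw [h1, h2, hm]
      push_cast
      rw [show ((-1:ℂ)*z + 2*m)/((0:ℂ)*z+(-1)) = (z:ℂ) + 2*(-m:ℂ) by
        rw [zero_mul, zero_add]
        field_simp
        ring]
      exact_mod_cast lambda_vadd (-m) z
  · have hpar1 : (g 0 0) % 2 ≠ (g 1 0) % 2 := by omega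
    obtain ⟨k₁, hk₁⟩ := exists_shrink (g 0 0) (g 1 0) hc0 hpar1
    set g₁ : SL2Z := ModularGroup.T ^ (2*k₁) * g with hg₁def
    have hg₁coe : (g₁ : Matrix (Fin 2) (Fin 2) ℤ) =
        !![g 0 0 + 2*k₁*(g 1 0), g 0 1 + 2*k₁*(g 1 1); g 1 0, g 1 1] := by
      rw [hg₁def, Matrix.SpecialLinearGroup.coe_mul, ModularGroup.coe_T_zpow]
      ext i j
      fin_cases i <;> fin_cases j <;>
        simp [Matrix.mul_apply, Fin.sum_univ_two] <;> ring
    have e00 : g₁ 0 0 = g 0 0 + 2*k₁*(g 1 0) := by rw [hg₁coe]; rfl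
    have e01 : g₁ 0 1 = g 0 1 + 2*k₁*(g 1 1) := by rw [hg₁coe]; rfl
    have e10 : g₁ 1 0 = g 1 0 := by rw [hg₁coe]; rfl
    have ha₁ : g₁ 0 0 % 2 = 1 := by
      rw [e00]
      obtain ⟨t, ht⟩ : ∃ t, (2*k₁*(g 1 0)) = 2*t := ⟨k₁*(g 1 0), by ring⟩
      rw [ht]; omega
    have ha₁0 : g₁ 0 0 ≠ 0 := by
      intro h0
      rw [h0] at ha₁
      omega
    have hpar2 : (g₁ 1 0) % 2 ≠ (g₁ 0 0) % 2 := by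
      rw [e10]; omega
    obtain ⟨k₂, hk₂⟩ := exists_shrink (g₁ 1 0) (g₁ 0 0) ha₁0 hpar2
    set g₂ : SL2Z := Wmat ^ k₂ * g₁ with hg₂def
    have hg₂coe : (g₂ : Matrix (Fin 2) (Fin 2) ℤ) =
        !![g₁ 0 0, g₁ 0 1; g₁ 1 0 + 2*k₂*(g₁ 0 0), g₁ 1 1 + 2*k₂*(g₁ 0 1)] := by
      rw [hg₂def, Matrix.SpecialLinearGroup.coe_mul, W_zpow]
      ext i j
      fin_cases i <;> fin_cases j <;>
        simp [Matrix.mul_apply, Fin.sum_univ_two] <;> ring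
    have f00 : g₂ 0 0 = g₁ 0 0 := by rw [hg₂coe]; rfl
    have f01 : g₂ 0 1 = g₁ 0 1 := by rw [hg₂coe]; rfl
    have f10 : g₂ 1 0 = g₁ 1 0 + 2*k₂*(g₁ 0 0) := by rw [hg₂coe]; rfl
    have hmes : (g₂ 1 0).natAbs < n := by
      rw [f10]
      have h2 : (g₁ 0 0).natAbs < (g 1 0).natAbs := by rw [e00]; exact hk₁
      omega
    have hg₂mem : g₂ ∈ lamInv := by
      refine IH ((g₂ 1 0).natAbs) hmes g₂ le_rfl ?_ ?_ ?_
      · rw [f00]; exact ha₁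
      · rw [f01, e01]
        obtain ⟨t, ht⟩ : ∃ t, (2*k₁*(g 1 1)) = 2*t := ⟨k₁*(g 1 1), by ring⟩
        rw [ht]; omega
      · rw [f10, e10]
        obtain ⟨t, ht⟩ : ∃ t, (2*k₂*(g₁ 0 0)) = 2*t := ⟨k₂*(g₁ 0 0), by ring⟩
        rw [ht]; omega
    have hT2k : ModularGroup.T ^ (2*k₁) ∈ lamInv := by
      rw [zpow_mul]
      exact zpow_mem T2_mem k₁
    have hWk : Wmat ^ k₂ ∈ lamInv := zpow_mem W_mem k₂
    have hgeq : g = (ModularGroup.T ^ (2*k₁))⁻¹ * ((Wmat ^ k₂)⁻¹ * g₂) := by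
      rw [hg₂def, hg₁def]
      group
    rw [hgeq]
    exact mul_mem (inv_mem hT2k) (mul_mem (inv_mem hWk) hg₂mem)


/-- The modular lambda function `λ(τ) = θ₂(τ)⁴/θ₃(τ)⁴` is invariant under the Möbius
action of the principal congruence subgroup `Γ(2) ⊂ SL(2,ℤ)`, i.e. of those matrices
`(a b; c d)` with `ad − bc = 1`, `a ≡ d ≡ 1 (mod 2)` and `b ≡ c ≡ 0 (mod 2)`:
it is a modular function (Hauptmodul) for `Γ(2)`. -/
theorem modularLambda_Gamma_two_invariant
    (τ : ℂ) (hτ : 0 < τ.im) (a b c d : ℤ)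
    (hdet : a * d - b * c = 1)
    (ha : a % 2 = 1) (hd : d % 2 = 1) (hb : b % 2 = 0) (hc : c % 2 = 0) :
    modularLambda (((a : ℂ) * τ + (b : ℂ)) / ((c : ℂ) * τ + (d : ℂ))) =
      modularLambda τ := by
  set g : SL2Z := ⟨!![a,b;c,d], by rw [Matrix.det_fin_two_of]; linarith⟩ with hg
  have h00 : g 0 0 = a := rfl
  have h01 : g 0 1 = b := rfl
  have h10 : g 1 0 = c := rfl
  have h11 : g 1 1 = d := rfl
  have hmem : g ∈ lamInv := by
    refine gamma_two_mem (g 1 0).natAbs g le_rfl ?_ ?_ ?_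
    · rw [h00]; exact ha
    · rw [h01]; exact hb
    · rw [h10]; exact hc
  have h := hmem ⟨τ, hτ⟩
  rw [smul_coe, h00, h01, h10, h11] at h
  exact h
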